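/- Let w, w̃ : ℕ → {1,−1} be fixed keystream weight sequences. Suppose two plaintext bit sequences p, q : ℕ → {0,1} are encrypted bitwise with the same weights, producing p'(k) = E(p(k), w(k), w̃(k)) and q'(k) = E(q(k), w(k), w̃(k)). Then for every index k, q(k) = q'(k) XOR (p(k) XOR p'(k)); that is, the mask obtained by XORing one known plaintext/ciphertext pair decrypts any other ciphertext produced with the same key. -/

import Mathlib

/-- The threshold function: `f x = 1` if `x ≥ 0`, `0` otherwise. -/
noncomputable def f (x : ℝ) : ℕ := if 0 ≤ x then 1 else 0

/-- The bit `(w+1)/2` derived from a weight `w ∈ {1, -1}`, as a natural number. -/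
noncomputable def wbit (w : ℝ) : ℕ := ⌊(w + 1) / 2⌋.toNat

/-- Encryption of a bit `p` with weights `w, w̃ ∈ {1,-1}`:
`E p w w̃ = f (p·w + c·w̃ - θ)` if `w = 1`, `f (p·w - c·w̃ + θ)` otherwise,
where `c = -w/2` and `θ = ((w+1)/2) XOR ((w̃+1)/2)` (XOR of bits, cast to ℝ). -/
noncomputable def E (p : ℕ) (w wt : ℝ) : ℕ :=
  if w = 1 then
    f ((p : ℝ) * w + (-w / 2) * wt - ((wbit w ^^^ wbit wt : ℕ) : ℝ))
  else
    f ((p : ℝ) * w - (-w / 2) * wt + ((wbit w ^^^ wbit wt : ℕ) : ℝ))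

/-!
Whatever the value of `w̃ ∈ {1, -1}`, encryption with `w = 1` is the identity on bits and
encryption with `w = -1` flips the bit. Hence `E p w w̃ = p XOR E 0 w w̃`: a ciphertext is the
plaintext masked by a bit depending on the key alone, and the mask `p XOR p'` recovered from one
known pair cancels the mask of any other ciphertext.
-/

lemma wbit_one : wbit 1 = 1 := by norm_num [wbit]

lemma wbit_neg_one : wbit (-1) = 0 := by norm_num [wbit]

lemma E_one {p : ℕ} {wt : ℝ} (hp : p = 0 ∨ p = 1) (hwt : wt = 1 ∨ wt = -1) :
    E p 1 wt = p := by
  rcases hwt with rfl | rfl <;> rcases hp with rfl | rfl <;>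
    norm_num [E, f, wbit_one, wbit_neg_one]

lemma E_neg_one {p : ℕ} {wt : ℝ} (hp : p = 0 ∨ p = 1) (hwt : wt = 1 ∨ wt = -1) :
    E p (-1) wt = p ^^^ 1 := by
  rcases hwt with rfl | rfl <;> rcases hp with rfl | rfl <;>
    norm_num [E, f, wbit_one, wbit_neg_one]

lemma E_eq_xor_E_zero {p : ℕ} {w wt : ℝ} (hp : p = 0 ∨ p = 1) (hw : w = 1 ∨ w = -1)
    (hwt : wt = 1 ∨ wt = -1) : E p w wt = p ^^^ E 0 w wt := by
  rcases hw with rfl | rfl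
  · rw [E_one hp hwt, E_one (Or.inl rfl) hwt, Nat.xor_zero]
  · rw [E_neg_one hp hwt, E_neg_one (Or.inl rfl) hwt, Nat.zero_xor]

lemma xor_mask_cancel (p q m : ℕ) : q ^^^ m ^^^ (p ^^^ (p ^^^ m)) = q := by
  rw [← Nat.xor_assoc p p m, Nat.xor_self, Nat.zero_xor, Nat.xor_assoc, Nat.xor_self,
    Nat.xor_zero]

theorem stmt_9 (w wt : ℕ → ℝ)
    (hw : ∀ k, w k = 1 ∨ w k = -1) (hwt : ∀ k, wt k = 1 ∨ wt k = -1)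
    (p q : ℕ → ℕ) (hp : ∀ k, p k = 0 ∨ p k = 1) (hq : ∀ k, q k = 0 ∨ q k = 1)
    (p' q' : ℕ → ℕ)
    (hp' : ∀ k, p' k = E (p k) (w k) (wt k))
    (hq' : ∀ k, q' k = E (q k) (w k) (wt k)) :
    ∀ k, q k = q' k ^^^ (p k ^^^ p' k) := by
  intro k
  rw [hp' k, hq' k, E_eq_xor_E_zero (hp k) (hw k) (hwt k),
    E_eq_xor_E_zero (hq k) (hw k) (hwt k), xor_mask_cancel]
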